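/- For every integer q ≥ 2 and integer n ≥ 3, if d = (n−1)q then the floor of (q−1)(q^{n+1}−1)·d / (q(q^n−1) − n(q−1)) is at most q(d−n+1) + 1. -/
import Mathlib

/-- `(n+1)*q ≤ q^n` for `q ≥ 2`, `n ≥ 3`. -/
lemma aux_pow_ge (q n : ℕ) (hq : 2 ≤ q) (hn : 3 ≤ n) :
    ((n : ℤ) + 1) * q ≤ (q : ℤ) ^ n := by
  have h1 : n + 1 ≤ 2 ^ (n - 1) := by
    induction n with
    | zero => omega
    | succ m ih =>
      rcases Nat.lt_or_ge m 3 with h | h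
      · interval_cases m <;> simp <;> omega
      · have := ih (by omega)
        have h2 : m + 1 - 1 ≤ m + 1 - 1 := le_refl _
        have : 2 ^ (m - 1) * 2 = 2 ^ (m + 1 - 1) := by
          rw [← pow_succ]; congr 1; omega
        omega
  have h2 : (2:ℕ) ^ (n-1) ≤ q ^ (n-1) := Nat.pow_le_pow_left hq _
  have h3 : (n + 1) * q ≤ q ^ (n-1) * q := Nat.mul_le_mul_right q (le_trans h1 h2)
  have h4 : q ^ (n-1) * q = q ^ n := by rw [← pow_succ]; congr 1; omega
  have : (n + 1) * q ≤ q ^ n := by omega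
  exact_mod_cast this

lemma aux_key (q n : ℕ) (hq : 2 ≤ q) (hn : 3 ≤ n) :
    ((n : ℤ) ^ 2 - 1) * q * ((q:ℤ) - 1) ^ 2 + 2 * q + 2 * n * ((q:ℤ) - 1)
      < 2 * (q:ℤ) ^ (n + 1) := by
  induction n, hn using Nat.le_induction with
  | base =>
    have hq' : (2:ℤ) ≤ q := by exact_mod_cast hq
    push_cast
    nlinarith [sq_nonneg ((q:ℤ) - 2), sq_nonneg ((q:ℤ)^2 - 2*q), sq_nonneg ((q:ℤ) - 1),
      mul_pos (show (0:ℤ) < q by linarith) (show (0:ℤ) < q by linarith)]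
  | succ m hm ih =>
    have hq' : (2:ℤ) ≤ q := by exact_mod_cast hq
    have hm' : (3:ℤ) ≤ m := by exact_mod_cast hm
    have hA := aux_pow_ge q m hq hm
    have hx : (q:ℤ) ^ (m+1) = (q:ℤ)^m * q := pow_succ _ _
    have hx2 : (q:ℤ) ^ (m+2) = (q:ℤ)^m * q * q := by rw [pow_succ, pow_succ]
    push_cast
    rw [show m + 1 + 1 = m + 2 from rfl] at *
    rw [hx2]
    rw [hx] at ih
    nlinarith [ih, hA, mul_pos (show (0:ℤ) < q by linarith) (show (0:ℤ) < q by linarith),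
      mul_nonneg (mul_nonneg (show (0:ℤ) ≤ m by linarith) (show (0:ℤ) ≤ q by linarith)) (show (0:ℤ) ≤ q - 1 by linarith),
      mul_le_mul_of_nonneg_right hA (show (0:ℤ) ≤ q*(q-1) by nlinarith)]

/-- For every integer `q ≥ 2` and integer `n ≥ 3`, if `d = (n−1)q` then the floor of
`(q−1)(q^{n+1}−1)·d / (q(q^n−1) − n(q−1))` is at most `q(d−n+1) + 1`. -/
theorem homma_bound_floor_boundary (q n d : ℕ)
    (hq : 2 ≤ q) (hn : 3 ≤ n) (hd : d = (n - 1) * q) :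
    ⌊((q : ℚ) - 1) * ((q : ℚ) ^ (n + 1) - 1) * (d : ℚ) /
        ((q : ℚ) * ((q : ℚ) ^ n - 1) - (n : ℚ) * ((q : ℚ) - 1))⌋ ≤
      (q : ℤ) * ((d : ℤ) - (n : ℤ) + 1) + 1 := by
  have hq' : (2:ℤ) ≤ q := by exact_mod_cast hq
  have hn' : (3:ℤ) ≤ n := by exact_mod_cast hn
  -- Bernoulli: q^n ≥ 1 + n (q-1)
  have hbern : 1 + (n:ℤ) * ((q:ℤ) - 1) ≤ (q:ℤ) ^ n := by
    have := one_add_mul_le_pow (show (-2:ℤ) ≤ (q:ℤ) - 1 by linarith) n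
    simpa using this
  have hBpos : (0:ℤ) < (q:ℤ) * ((q:ℤ)^n - 1) - (n:ℤ) * ((q:ℤ) - 1) := by
    have h := mul_le_mul_of_nonneg_left
      (show (n:ℤ) * ((q:ℤ) - 1) ≤ (q:ℤ)^n - 1 by linarith) (show (0:ℤ) ≤ q by linarith)
    nlinarith [h, mul_pos (show (0:ℤ) < n by linarith) (show (0:ℤ) < (q:ℤ) - 1 by linarith)]
  have hBposQ : (0:ℚ) < (q:ℚ) * ((q:ℚ)^n - 1) - (n:ℚ) * ((q:ℚ) - 1) := by
    exact_mod_cast hBpos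
  have hdQ : (d:ℚ) = ((n:ℚ) - 1) * q := by
    subst hd
    push_cast [Nat.cast_sub (show 1 ≤ n by omega)]
    ring
  have hdZ : (d:ℤ) = ((n:ℤ) - 1) * q := by
    subst hd
    push_cast [Nat.cast_sub (show 1 ≤ n by omega)]
    ring
  have key := aux_key q n hq hn
  -- the target integer bound
  set m : ℤ := (q : ℤ) * ((d : ℤ) - (n : ℤ) + 1) + 1 with hm
  have hAB : ((q:ℤ) - 1) * ((q:ℤ) ^ (n + 1) - 1) * (d:ℤ)
      < (m + 1) * ((q:ℤ) * ((q:ℤ)^n - 1) - (n:ℤ) * ((q:ℤ) - 1)) := by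
    have hid : (m + 1) * ((q:ℤ) * ((q:ℤ)^n - 1) - (n:ℤ) * ((q:ℤ) - 1))
        - ((q:ℤ) - 1) * ((q:ℤ) ^ (n + 1) - 1) * (d:ℤ)
        = 2 * (q:ℤ)^(n+1)
          - (((n : ℤ) ^ 2 - 1) * q * ((q:ℤ) - 1) ^ 2 + 2 * q + 2 * n * ((q:ℤ) - 1)) := by
      rw [hm, hdZ, pow_succ]; ring
    linarith
  have hlt : ((q : ℚ) - 1) * ((q : ℚ) ^ (n + 1) - 1) * (d : ℚ) /
        ((q : ℚ) * ((q : ℚ) ^ n - 1) - (n : ℚ) * ((q : ℚ) - 1)) < ((m + 1 : ℤ) : ℚ) := by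
    rw [div_lt_iff₀ hBposQ]
    exact_mod_cast hAB
  have := Int.floor_lt.mpr hlt
  omega
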